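/- arXiv:2307.04177 — 9 statements merged into one kernel-verified Lean document; each statement's English description precedes it below -/
import Mathlib

section
/- Let {·,·} be a Jacobi bracket on a commutative ring A, and for h ∈ A let X_h : A → A be the symbol X_h (f) = {f, h} − f * {1, h}. Then for all h₁, h₂, f ∈ A one has X_{h₁} (X_{h₂} f) − X_{h₂} (X_{h₁} f) = − X_{{h₁, h₂}} f; that is, the commutator of the symbols equals minus the symbol of the bracket (part (d) of Theorem 3.3 of the paper, in the case of a trivial line bundle). -/
/-!
Expanding with the Leibniz rule, all terms of `X_{h₁} (X_{h₂} f)` that are symmetric in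
`h₁, h₂` cancel in the commutator, leaving `{{f, h₂}, h₁} - {{f, h₁}, h₂}` minus `f` times the
same expression at `f = 1`. By the Jacobi identity and antisymmetry this is
`-{f, {h₁, h₂}} + f * {1, {h₁, h₂}} = -X_{{h₁, h₂}} f`.
-/

/-- The symbol `X_h` of the derivation `[·, h]` associated with a bracket:
`X_h f = {f, h} - f * {1, h}`. -/
def jacobiSymbol {A : Type*} [CommRing A] (bracket : A → A → A) (h f : A) : A :=
  bracket f h - f * bracket 1 h

section Bracket

variable {A : Type*} [CommRing A] {bracket : A → A → A}

theorem bracket_sub_left (hadd₁ : ∀ f g h : A, bracket (f + g) h = bracket f h + bracket g h)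
    (f g h : A) : bracket (f - g) h = bracket f h - bracket g h :=
  map_sub (AddMonoidHom.mk' (bracket · h) fun f g => hadd₁ f g h) f g

theorem bracket_neg_left (hadd₁ : ∀ f g h : A, bracket (f + g) h = bracket f h + bracket g h)
    (f h : A) : bracket (-f) h = -bracket f h :=
  map_neg (AddMonoidHom.mk' (bracket · h) fun f g => hadd₁ f g h) f

theorem bracket_antisymm (hadd₁ : ∀ f g h : A, bracket (f + g) h = bracket f h + bracket g h)
    (hadd₂ : ∀ f g h : A, bracket f (g + h) = bracket f g + bracket f h)
    (halt : ∀ f : A, bracket f f = 0) (f g : A) : bracket f g = -bracket g f := by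
  have h := halt (f + g)
  rw [hadd₁, hadd₂, hadd₂, halt, halt] at h
  linear_combination h

theorem bracket_bracket_sub_bracket_bracket
    (hadd₁ : ∀ f g h : A, bracket (f + g) h = bracket f h + bracket g h)
    (hadd₂ : ∀ f g h : A, bracket f (g + h) = bracket f g + bracket f h)
    (halt : ∀ f : A, bracket f f = 0)
    (hjac : ∀ f g h : A,
      bracket (bracket f g) h + bracket (bracket g h) f + bracket (bracket h f) g = 0)
    (f g h : A) :
    bracket (bracket f g) h - bracket (bracket f h) g = -bracket f (bracket h g) := by
  have antisymm := bracket_antisymm hadd₁ hadd₂ halt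
  rw [antisymm f (bracket h g), antisymm h g, antisymm f h, bracket_neg_left hadd₁,
    bracket_neg_left hadd₁, neg_neg]
  linear_combination hjac f g h

theorem jacobiSymbol_comp_sub_comp
    (hadd₁ : ∀ f g h : A, bracket (f + g) h = bracket f h + bracket g h)
    (hleib : ∀ f g h : A,
      bracket (f * g) h = f * bracket g h + g * bracket f h - f * g * bracket 1 h)
    (h₁ h₂ f : A) :
    jacobiSymbol bracket h₁ (jacobiSymbol bracket h₂ f)
        - jacobiSymbol bracket h₂ (jacobiSymbol bracket h₁ f)
      = bracket (bracket f h₂) h₁ - bracket (bracket f h₁) h₂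
        - f * (bracket (bracket 1 h₂) h₁ - bracket (bracket 1 h₁) h₂) := by
  simp only [jacobiSymbol, bracket_sub_left hadd₁, hleib]
  ring

end Bracket

/-- For a Jacobi bracket on a commutative ring `A`, the commutator of
the symbols equals minus the symbol of the bracket:
`X_{h₁} ∘ X_{h₂} - X_{h₂} ∘ X_{h₁} = - X_{{h₁, h₂}}`. -/
theorem jacobiSymbol_commutator {A : Type*} [CommRing A]
    (bracket : A → A → A)
    (hadd₁ : ∀ f g h : A, bracket (f + g) h = bracket f h + bracket g h)
    (hadd₂ : ∀ f g h : A, bracket f (g + h) = bracket f g + bracket f h)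
    (halt : ∀ f : A, bracket f f = 0)
    (hjac : ∀ f g h : A,
      bracket (bracket f g) h + bracket (bracket g h) f + bracket (bracket h f) g = 0)
    (hleib : ∀ f g h : A,
      bracket (f * g) h = f * bracket g h + g * bracket f h - f * g * bracket 1 h) :
    ∀ h₁ h₂ f : A,
      jacobiSymbol bracket h₁ (jacobiSymbol bracket h₂ f)
        - jacobiSymbol bracket h₂ (jacobiSymbol bracket h₁ f)
        = - jacobiSymbol bracket (bracket h₁ h₂) f := by
  intro h₁ h₂ f
  have jacobi := bracket_bracket_sub_bracket_bracket hadd₁ hadd₂ halt hjac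
  rw [jacobiSymbol_comp_sub_comp hadd₁ hleib, jacobi, jacobi, jacobiSymbol]
  ring
end

section
/- For every s ∈ ℝ, every differentiable F, G : E × E → ℝ and every (q, p) ∈ E × E, the canonical Poisson bracket satisfies {F ∘ φ_s, G ∘ φ_s}(q, p) = s * {F, G}(q, s • p); i.e. the canonical Poisson structure of the cotangent bundle is homogeneous of degree one with respect to fiberwise scaling (equation (Ps2) of the paper in canonical coordinates). -/
noncomputable section

/-!
Fiberwise scaling `φ_s` is linear, so by the chain rule `d(F ∘ φ_s)` at `(q, p)` is `dF` at
`(q, s • p)` composed with `φ_s`: unchanged on `q`-directions and multiplied by `s` on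
`p`-directions. Every term of the bracket pairs one `q`-derivative with one `p`-derivative,
so the bracket picks up exactly one factor `s`.
-/

/-- The `i`-th standard basis vector of `EuclideanSpace ℝ (Fin n)`. -/
def stdBasis (n : ℕ) (i : Fin n) : EuclideanSpace ℝ (Fin n) :=
  EuclideanSpace.single i (1 : ℝ)

/-- The canonical Poisson bracket of two functions on the phase space
`E × E`, `E = EuclideanSpace ℝ (Fin n)`, in canonical coordinates. -/
def poissonBracket {n : ℕ}
    (F G : EuclideanSpace ℝ (Fin n) × EuclideanSpace ℝ (Fin n) → ℝ)
    (x : EuclideanSpace ℝ (Fin n) × EuclideanSpace ℝ (Fin n)) : ℝ :=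
  ∑ i : Fin n,
    (fderiv ℝ F x (stdBasis n i, 0) * fderiv ℝ G x (0, stdBasis n i)
      - fderiv ℝ F x (0, stdBasis n i) * fderiv ℝ G x (stdBasis n i, 0))

section FiberScaling

variable {𝕜 E F G : Type*} [NontriviallyNormedField 𝕜]
  [NormedAddCommGroup E] [NormedSpace 𝕜 E] [NormedAddCommGroup F] [NormedSpace 𝕜 F]
  [NormedAddCommGroup G] [NormedSpace 𝕜 G]

variable (E) in
def fiberScaling (s : 𝕜) : E × F →L[𝕜] E × F :=
  (ContinuousLinearMap.id 𝕜 E).prodMap (s • ContinuousLinearMap.id 𝕜 F)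

@[simp]
theorem fiberScaling_apply (s : 𝕜) (z : E × F) : fiberScaling E s z = (z.1, s • z.2) := rfl

theorem fderiv_comp_fiberScaling {H : E × F → G} {s : 𝕜} {q : E} {p : F}
    (hH : DifferentiableAt 𝕜 H (q, s • p)) :
    fderiv 𝕜 (fun z : E × F => H (z.1, s • z.2)) (q, p)
      = (fderiv 𝕜 H (q, s • p)).comp (fiberScaling E s) := by
  rw [show (fun z : E × F => H (z.1, s • z.2)) = H ∘ fiberScaling E s from rfl,
    fderiv_comp (q, p) hH (fiberScaling E s).differentiableAt, ContinuousLinearMap.fderiv]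
  rfl

theorem fderiv_comp_fiberScaling_apply_inl {H : E × F → G} {s : 𝕜} {q : E} {p : F}
    (hH : DifferentiableAt 𝕜 H (q, s • p)) (v : E) :
    fderiv 𝕜 (fun z : E × F => H (z.1, s • z.2)) (q, p) (v, 0)
      = fderiv 𝕜 H (q, s • p) (v, 0) := by
  simp [fderiv_comp_fiberScaling hH]

theorem fderiv_comp_fiberScaling_apply_inr {H : E × F → G} {s : 𝕜} {q : E} {p : F}
    (hH : DifferentiableAt 𝕜 H (q, s • p)) (w : F) :
    fderiv 𝕜 (fun z : E × F => H (z.1, s • z.2)) (q, p) (0, w)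
      = s • fderiv 𝕜 H (q, s • p) (0, w) := by
  rw [fderiv_comp_fiberScaling hH, ContinuousLinearMap.comp_apply, fiberScaling_apply,
    ← map_smul, Prod.smul_mk, smul_zero]

end FiberScaling

/-- The canonical Poisson structure of the cotangent bundle is
homogeneous of degree one with respect to fiberwise scaling:
`{F ∘ φ_s, G ∘ φ_s}(q, p) = s * {F, G}(q, s • p)`. -/
theorem poissonBracket_fiberwise_scaling {n : ℕ} (s : ℝ)
    (F G : EuclideanSpace ℝ (Fin n) × EuclideanSpace ℝ (Fin n) → ℝ)
    (hF : Differentiable ℝ F) (hG : Differentiable ℝ G)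
    (q p : EuclideanSpace ℝ (Fin n)) :
    poissonBracket (fun z => F (z.1, s • z.2)) (fun z => G (z.1, s • z.2)) (q, p)
      = s * poissonBracket F G (q, s • p) := by
  simp only [poissonBracket, Finset.mul_sum, fderiv_comp_fiberScaling_apply_inl (hF _),
    fderiv_comp_fiberScaling_apply_inl (hG _), fderiv_comp_fiberScaling_apply_inr (hF _),
    fderiv_comp_fiberScaling_apply_inr (hG _), smul_eq_mul]
  exact Finset.sum_congr rfl fun i _ => by ring
end
end

section
/- Let F, G : E × E → ℝ be differentiable and homogeneous of degree one in the fibers, i.e. F(q, s • p) = s * F(q, p) and G(q, s • p) = s * G(q, p) for all nonzero s ∈ ℝ and all (q, p). Then their canonical Poisson bracket is again homogeneous: {F, G}(q, s • p) = s * {F, G}(q, p) for all nonzero s ∈ ℝ and all (q, p). (This is the closure of homogeneous functions under the Poisson bracket used in the proof of Theorem 3.3 of the paper, in canonical coordinates.) -/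
/-! Differentiating the homogeneity identity `f (q, s • p) = s • f (q, p)` shows that at
`(q, s • p)` the `q`-derivatives of `f` are `s` times those at `(q, p)`, while the
`p`-derivatives are unchanged. Each term of the bracket pairs one `q`-derivative with one
`p`-derivative, hence scales by `s`. -/

noncomputable section

section FiberwiseHomogeneous

variable {𝕜 E F G : Type*} [NontriviallyNormedField 𝕜]
  [NormedAddCommGroup E] [NormedSpace 𝕜 E] [NormedAddCommGroup F] [NormedSpace 𝕜 F]
  [NormedAddCommGroup G] [NormedSpace 𝕜 G]
  {f : E × F → G} {s : 𝕜} {q : E} {p : F}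

theorem fderiv_fiberSmul_of_homogeneous (hs : s ≠ 0)
    (hf : ∀ q p, f (q, s • p) = s • f (q, p)) (hd : DifferentiableAt 𝕜 f (q, s • p))
    (v : E × F) :
    fderiv 𝕜 f (q, s • p) (v.1, s • v.2) = s • fderiv 𝕜 f (q, p) v := by
  let T : E × F →L[𝕜] E × F :=
    (ContinuousLinearMap.id 𝕜 E).prodMap (s • ContinuousLinearMap.id 𝕜 F)
  have hfT : f ∘ T = s • f := funext fun x => hf x.1 x.2
  have hcomp : HasFDerivAt (s • f) ((fderiv 𝕜 f (q, s • p)).comp T) (q, p) :=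
    hfT ▸ hd.hasFDerivAt.comp (q, p) T.hasFDerivAt
  -- `f = s⁻¹ • (f ∘ T)`, so differentiability at `(q, s • p)` alone suffices.
  have hderiv : fderiv 𝕜 f (q, p) = s⁻¹ • (fderiv 𝕜 f (q, s • p)).comp T := by
    simpa [inv_smul_smul₀ hs] using (hcomp.const_smul s⁻¹).fderiv
  rw [hderiv, smul_apply, smul_inv_smul₀ hs]
  rfl

theorem fderiv_fiberSmul_apply_inl_of_homogeneous (hs : s ≠ 0)
    (hf : ∀ q p, f (q, s • p) = s • f (q, p)) (hd : DifferentiableAt 𝕜 f (q, s • p)) (u : E) :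
    fderiv 𝕜 f (q, s • p) (u, 0) = s • fderiv 𝕜 f (q, p) (u, 0) := by
  simpa using fderiv_fiberSmul_of_homogeneous hs hf hd (u, 0)

theorem fderiv_fiberSmul_apply_inr_of_homogeneous (hs : s ≠ 0)
    (hf : ∀ q p, f (q, s • p) = s • f (q, p)) (hd : DifferentiableAt 𝕜 f (q, s • p)) (w : F) :
    fderiv 𝕜 f (q, s • p) (0, w) = fderiv 𝕜 f (q, p) (0, w) := by
  have h := fderiv_fiberSmul_of_homogeneous hs hf hd (0, w)
  dsimp only at h
  rw [show ((0 : E), s • w) = s • ((0 : E), w) by simp, map_smul] at h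
  exact smul_right_injective G hs h

end FiberwiseHomogeneous

/-- The canonical Poisson bracket of two fiberwise-homogeneous
functions of degree one is again homogeneous of degree one in the fibers. -/
theorem poissonBracket_of_homogeneous_is_homogeneous {n : ℕ}
    (F G : EuclideanSpace ℝ (Fin n) × EuclideanSpace ℝ (Fin n) → ℝ)
    (hF : Differentiable ℝ F) (hG : Differentiable ℝ G)
    (hFhom : ∀ s : ℝ, s ≠ 0 → ∀ q p : EuclideanSpace ℝ (Fin n),
      F (q, s • p) = s * F (q, p))
    (hGhom : ∀ s : ℝ, s ≠ 0 → ∀ q p : EuclideanSpace ℝ (Fin n),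
      G (q, s • p) = s * G (q, p)) :
    ∀ s : ℝ, s ≠ 0 → ∀ q p : EuclideanSpace ℝ (Fin n),
      poissonBracket F G (q, s • p) = s * poissonBracket F G (q, p) := by
  intro s hs q p
  unfold poissonBracket
  rw [Finset.mul_sum]
  refine Finset.sum_congr rfl fun i _ => ?_
  rw [fderiv_fiberSmul_apply_inl_of_homogeneous hs (hFhom s hs) (hF _),
    fderiv_fiberSmul_apply_inr_of_homogeneous hs (hFhom s hs) (hF _),
    fderiv_fiberSmul_apply_inl_of_homogeneous hs (hGhom s hs) (hG _),
    fderiv_fiberSmul_apply_inr_of_homogeneous hs (hGhom s hs) (hG _), smul_eq_mul, smul_eq_mul]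
  ring
end
end

section
/- Let Y : E → E be a differentiable vector field, Y^ℓ(q, p) = ⟪p, Y q⟫ its momentum function, and define X(q, p) = (Y q, − (ContinuousLinearMap.adjoint (fderiv ℝ Y q)) p) ∈ E × E. Then for every (q, p) and every v = (v₁, v₂) ∈ E × E one has ω(X(q, p), v) = fderiv ℝ Y^ℓ (q, p) v, where ω((a, b), (c, d)) = ⟪a, d⟫ − ⟪b, c⟫ is the canonical symplectic pairing; i.e. X is the Hamiltonian vector field of the fiberwise-linear function Y^ℓ with respect to the canonical symplectic structure (the explicit expression X_{Y^ℓ} = Y^k ∂_{q^k} − p_j ∂_{q^k}Y^j ∂_{p_k} of Example 3.4 of the paper). -/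
/-! The momentum function `Y^ℓ(q, p) = ⟪p, Y q⟫` is differentiated by the product rule, giving
`d(Y^ℓ)(q,p)(v₁, v₂) = ⟪p, DY(q) v₁⟫ + ⟪v₂, Y q⟫`; moving `DY(q)` across the inner product turns
the first term into `⟪DY(q)* p, v₁⟫`, which is exactly the `−⟪X₂, v₁⟫` term of `ω(X, v)`. -/

open scoped RealInnerProductSpace

noncomputable section

/-- The canonical symplectic pairing `ω((a,b),(c,d)) = ⟪a, d⟫ − ⟪b, c⟫` on `E × E`. -/
def canSymp {n : ℕ}
    (u v : EuclideanSpace ℝ (Fin n) × EuclideanSpace ℝ (Fin n)) : ℝ :=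
  ⟪u.1, v.2⟫ - ⟪u.2, v.1⟫

section MomentumFunction

variable {E : Type*} [NormedAddCommGroup E] [InnerProductSpace ℝ E]

theorem fderiv_inner_snd_comp_fst_apply {Y : E → E} {q : E} (hY : DifferentiableAt ℝ Y q)
    (p : E) (v : E × E) :
    fderiv ℝ (fun z : E × E => ⟪z.2, Y z.1⟫) (q, p) v = ⟪p, fderiv ℝ Y q v.1⟫ + ⟪v.2, Y q⟫ := by
  have hYfst : HasFDerivAt (fun z : E × E => Y z.1)
      ((fderiv ℝ Y q).comp (ContinuousLinearMap.fst ℝ E E)) (q, p) :=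
    hY.hasFDerivAt.comp (q, p) hasFDerivAt_fst
  rw [(hasFDerivAt_snd.inner ℝ hYfst).fderiv]
  simp [fderivInnerCLM_apply]

end MomentumFunction

theorem canSymp_neg_adjoint_apply {n : ℕ} (a p : EuclideanSpace ℝ (Fin n))
    (A : EuclideanSpace ℝ (Fin n) →L[ℝ] EuclideanSpace ℝ (Fin n))
    (v : EuclideanSpace ℝ (Fin n) × EuclideanSpace ℝ (Fin n)) :
    canSymp (a, -(ContinuousLinearMap.adjoint A) p) v = ⟪a, v.2⟫ + ⟪p, A v.1⟫ := by
  rw [canSymp, inner_neg_left, ContinuousLinearMap.adjoint_inner_left, sub_neg_eq_add]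

/-- The vector field
`X(q, p) = (Y q, − (DY q)* p)` is the Hamiltonian vector field of the
fiberwise-linear momentum function `Y^ℓ(q,p) = ⟪p, Y q⟫` with respect to the canonical
symplectic pairing: `ω(X(q,p), v) = d(Y^ℓ)(q,p)(v)` for all `v`. -/
theorem hamVF_of_momentum_function {n : ℕ}
    (Y : EuclideanSpace ℝ (Fin n) → EuclideanSpace ℝ (Fin n))
    (hY : Differentiable ℝ Y)
    (X : EuclideanSpace ℝ (Fin n) × EuclideanSpace ℝ (Fin n) →
      EuclideanSpace ℝ (Fin n) × EuclideanSpace ℝ (Fin n))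
    (hX : ∀ q p : EuclideanSpace ℝ (Fin n),
      X (q, p) = (Y q, - (ContinuousLinearMap.adjoint (fderiv ℝ Y q)) p)) :
    ∀ q p : EuclideanSpace ℝ (Fin n),
      ∀ v : EuclideanSpace ℝ (Fin n) × EuclideanSpace ℝ (Fin n),
        canSymp (X (q, p)) v = fderiv ℝ (fun z => ⟪z.2, Y z.1⟫) (q, p) v := by
  intro q p v
  rw [hX, canSymp_neg_adjoint_apply,
    fderiv_inner_snd_comp_fst_apply (hY q), real_inner_comm (Y q), add_comm]
end
end

section
/- Let Y : E → E be differentiable, let i₀ : Fin n, and on the open set where p i₀ ≠ 0 define the projective chart map P(q, p) = (q, (p i₀)⁻¹ • p) and the Hamiltonian vector field X(q, p) = (Y q, − (ContinuousLinearMap.adjoint (fderiv ℝ Y q)) p) of the momentum function Y^ℓ(q,p) = ⟪p, Y q⟫. Then for every (q, p) with p i₀ ≠ 0, fderiv ℝ P (q, p) (X (q, p)) = (Y q, w), where, writing p̃ = (p i₀)⁻¹ • p and ∂ᵢY^j(q) = ⟪fderiv ℝ Y q (e i), e j⟫, the vector w ∈ E has components w i = ∑ j, p̃ j * (p̃ i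 * ∂_{i₀}Y^j(q) − ∂ᵢY^j(q)). In other words, the Hamiltonian vector field of Y^ℓ projects under the scaling quotient to the reduced vector field on the projective cotangent bundle computed in Example 3.4 of the paper. -/
/-!
The chart map is `id × ν` with `ν p = (p i₀)⁻¹ • p`, whose differential at `p` is
`w ↦ (p i₀)⁻¹ • (w - ((p i₀)⁻¹ * w i₀) • p)`, i.e. `(p i₀)⁻¹` times the projection onto
`{w i₀ = 0}` along the scaling direction `p`.
Applying it to the momentum component `-(DY q)† p` of `X`, whose `k`-th coordinate is
`-∑ j, p j * ∂ₖY^j(q)`, gives the reduced field after regrouping the sums.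
-/

open scoped RealInnerProductSpace

noncomputable section

section Normalization

variable {𝕜 E F : Type*} [NontriviallyNormedField 𝕜] [NormedAddCommGroup E] [NormedSpace 𝕜 E]
  [NormedAddCommGroup F] [NormedSpace 𝕜 F] {φ : F →L[𝕜] 𝕜} {v : F}

theorem hasFDerivAt_inv_smul_self (hv : φ v ≠ 0) :
    HasFDerivAt (fun x => (φ x)⁻¹ • x)
      ((φ v)⁻¹ • ContinuousLinearMap.id 𝕜 F + (-(φ v ^ 2)⁻¹ • φ).smulRight v) v :=
  ((hasDerivAt_inv hv).comp_hasFDerivAt v φ.hasFDerivAt).smul (hasFDerivAt_id v)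

theorem hasFDerivAt_prodMk_fst_inv_smul_snd (q : E) (hv : φ v ≠ 0) :
    HasFDerivAt (fun z : E × F => (z.1, (φ z.2)⁻¹ • z.2))
      ((ContinuousLinearMap.id 𝕜 E).prodMap
        ((φ v)⁻¹ • ContinuousLinearMap.id 𝕜 F + (-(φ v ^ 2)⁻¹ • φ).smulRight v)) (q, v) :=
  (hasFDerivAt_id q).prodMap (p := (q, v)) (hasFDerivAt_inv_smul_self hv)

end Normalization

theorem adjoint_apply_eq_sum_inner_stdBasis {n : ℕ}
    (A : EuclideanSpace ℝ (Fin n) →L[ℝ] EuclideanSpace ℝ (Fin n))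
    (p : EuclideanSpace ℝ (Fin n)) (k : Fin n) :
    (ContinuousLinearMap.adjoint A) p k = ∑ j, p j * ⟪A (stdBasis n k), stdBasis n j⟫ := by
  have h := ContinuousLinearMap.adjoint_inner_left A (stdBasis n k) p
  simp only [stdBasis, PiLp.inner_apply] at h ⊢
  simpa [mul_comm] using h

theorem hamVF_momentum_projects_to_projective_chart_general {n : ℕ} (i₀ : Fin n)
    (Y : EuclideanSpace ℝ (Fin n) → EuclideanSpace ℝ (Fin n))
    (P : EuclideanSpace ℝ (Fin n) × EuclideanSpace ℝ (Fin n) →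
      EuclideanSpace ℝ (Fin n) × EuclideanSpace ℝ (Fin n))
    (hP : ∀ z : EuclideanSpace ℝ (Fin n) × EuclideanSpace ℝ (Fin n),
      P z = (z.1, (z.2 i₀)⁻¹ • z.2))
    (X : EuclideanSpace ℝ (Fin n) × EuclideanSpace ℝ (Fin n) →
      EuclideanSpace ℝ (Fin n) × EuclideanSpace ℝ (Fin n))
    (hX : ∀ q p : EuclideanSpace ℝ (Fin n),
      X (q, p) = (Y q, - (ContinuousLinearMap.adjoint (fderiv ℝ Y q)) p)) :
    ∀ q p : EuclideanSpace ℝ (Fin n), p i₀ ≠ 0 →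
      (fderiv ℝ P (q, p) (X (q, p))).1 = Y q ∧
      ∀ i : Fin n,
        (fderiv ℝ P (q, p) (X (q, p))).2 i
          = ∑ j : Fin n, ((p i₀)⁻¹ • p) j *
              (((p i₀)⁻¹ • p) i * ⟪fderiv ℝ Y q (stdBasis n i₀), stdBasis n j⟫
                - ⟪fderiv ℝ Y q (stdBasis n i), stdBasis n j⟫) := by
  intro q p hp
  have hPderiv :=
    (hasFDerivAt_prodMk_fst_inv_smul_snd (φ := EuclideanSpace.proj (𝕜 := ℝ) i₀) q hp)
      |>.congr_of_eventuallyEq (.of_forall hP)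
  rw [hPderiv.fderiv, hX]
  refine ⟨rfl, fun i => ?_⟩
  simp only [PiLp.proj_apply, neg_smul, ContinuousLinearMap.coe_prodMap',
    ContinuousLinearMap.coe_id', FunLike.coe_add, FunLike.coe_smul, Prod.map_apply, id_eq,
    Pi.add_apply, Pi.smul_apply, smul_neg, ContinuousLinearMap.smulRight_apply, neg_apply,
    smul_apply, PiLp.neg_apply, adjoint_apply_eq_sum_inner_stdBasis, smul_eq_mul, mul_neg,
    neg_neg, PiLp.add_apply, PiLp.smul_apply]
  rw [Finset.mul_sum, Finset.mul_sum, Finset.sum_mul, ← Finset.sum_neg_distrib,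
    ← Finset.sum_add_distrib]
  exact Finset.sum_congr rfl fun j _ => by ring

/-- On the chart `{p i₀ ≠ 0}` of the scaling quotient, realized by the
normalization map `P(q, p) = (q, (p i₀)⁻¹ • p)`, the Hamiltonian vector field
`X(q, p) = (Y q, − (DY q)* p)` of the momentum function `Y^ℓ(q,p) = ⟪p, Y q⟫` projects
to the reduced vector field on the projective cotangent bundle whose components are
`(Y q, w)` with `w i = ∑ j, p̃ j * (p̃ i * ∂_{i₀}Y^j(q) − ∂ᵢY^j(q))`, `p̃ = (p i₀)⁻¹ • p`. -/
theorem hamVF_momentum_projects_to_projective_chart {n : ℕ} (i₀ : Fin n)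
    (Y : EuclideanSpace ℝ (Fin n) → EuclideanSpace ℝ (Fin n))
    (hY : Differentiable ℝ Y)
    (P : EuclideanSpace ℝ (Fin n) × EuclideanSpace ℝ (Fin n) →
      EuclideanSpace ℝ (Fin n) × EuclideanSpace ℝ (Fin n))
    (hP : ∀ z : EuclideanSpace ℝ (Fin n) × EuclideanSpace ℝ (Fin n),
      P z = (z.1, (z.2 i₀)⁻¹ • z.2))
    (X : EuclideanSpace ℝ (Fin n) × EuclideanSpace ℝ (Fin n) →
      EuclideanSpace ℝ (Fin n) × EuclideanSpace ℝ (Fin n))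
    (hX : ∀ q p : EuclideanSpace ℝ (Fin n),
      X (q, p) = (Y q, - (ContinuousLinearMap.adjoint (fderiv ℝ Y q)) p)) :
    ∀ q p : EuclideanSpace ℝ (Fin n), p i₀ ≠ 0 →
      (fderiv ℝ P (q, p) (X (q, p))).1 = Y q ∧
      ∀ i : Fin n,
        (fderiv ℝ P (q, p) (X (q, p))).2 i
          = ∑ j : Fin n, ((p i₀)⁻¹ • p) j *
              (((p i₀)⁻¹ • p) i * ⟪fderiv ℝ Y q (stdBasis n i₀), stdBasis n j⟫
                - ⟪fderiv ℝ Y q (stdBasis n i), stdBasis n j⟫) :=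
  hamVF_momentum_projects_to_projective_chart_general i₀ Y P hP X hX
end
end

section
/- For all (r, θ, r', θ') ∈ ℝ⁴ with r > 0 and r' > 0, one has fderiv ℝ P (r, θ, r', θ') (X (r, θ, r', θ')) = X₁ (P (r, θ, r', θ')), where P(r, θ, r', θ') = (r'/r, θ, θ') is the quotient map of the scaling symmetry and X₁(ρ', θ, θ') = ((1 + ρ'²) * cos(θ − θ'), ρ' * sin(θ − θ'), sin(θ − θ') / ρ'). That is, the Hamiltonian vector field of the 2d harmonic oscillator projects under the scaling reduction to the contact Hamiltonian vector field of equation (p1) of the paper. -/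
open Real

noncomputable section

/-- The Hamiltonian vector field of the 2d harmonic oscillator `H = (r² + r'²)/2` in
polar coordinates `(r, θ, r', θ')` on the punctured phase space. -/
def hoVF (x : ℝ × ℝ × ℝ × ℝ) : ℝ × ℝ × ℝ × ℝ :=
  (-(x.2.2.1) * cos (x.2.1 - x.2.2.2),
    (x.2.2.1 / x.1) * sin (x.2.1 - x.2.2.2),
    x.1 * cos (x.2.1 - x.2.2.2),
    (x.1 / x.2.2.1) * sin (x.2.1 - x.2.2.2))

/-- The quotient map of the scaling symmetry: `P(r, θ, r', θ') = (r'/r, θ, θ')`. -/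
def scalingQuot (x : ℝ × ℝ × ℝ × ℝ) : ℝ × ℝ × ℝ :=
  (x.2.2.1 / x.1, x.2.1, x.2.2.2)

/-- The reduced contact Hamiltonian vector field
`X₁(ρ', θ, θ') = ((1 + ρ'²) cos(θ − θ'), ρ' sin(θ − θ'), sin(θ − θ')/ρ')`. -/
def contactVF (y : ℝ × ℝ × ℝ) : ℝ × ℝ × ℝ :=
  ((1 + y.1 ^ 2) * cos (y.2.1 - y.2.2), y.1 * sin (y.2.1 - y.2.2),
    sin (y.2.1 - y.2.2) / y.1)


/-! Differentiating `scalingQuot` along the line `t ↦ x + t • v` reduces its derivative to the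
one-variable quotient rule for `r'/r`, the angles being carried along unchanged. Along the
oscillator field, `d(r'/r) = (r² + r'²) cos(θ - θ') / r² = (1 + (r'/r)²) cos(θ - θ')`, and the
remaining components match on the nose. -/

theorem differentiableAt_scalingQuot {x : ℝ × ℝ × ℝ × ℝ} (hx : x.1 ≠ 0) :
    DifferentiableAt ℝ scalingQuot x := by
  unfold scalingQuot
  fun_prop (disch := assumption)

theorem hasLineDerivAt_scalingQuot {x : ℝ × ℝ × ℝ × ℝ} (hx : x.1 ≠ 0) (v : ℝ × ℝ × ℝ × ℝ) :
    HasLineDerivAt ℝ scalingQuot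
      ((v.2.2.1 * x.1 - x.2.2.1 * v.1) / x.1 ^ 2, v.2.1, v.2.2.2) x v := by
  have hline (a b : ℝ) : HasDerivAt (fun t : ℝ => a + t * b) b 0 := by
    simpa using ((hasDerivAt_id (0 : ℝ)).mul_const b).const_add a
  have hquot := (hline x.2.2.1 v.2.2.1).fun_div (hline x.1 v.1) (by simpa using hx)
  refine HasDerivAt.prodMk ?_ ((hline _ _).prodMk (hline _ _))
  simpa using hquot

theorem fderiv_scalingQuot_apply {x : ℝ × ℝ × ℝ × ℝ} (hx : x.1 ≠ 0) (v : ℝ × ℝ × ℝ × ℝ) :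
    fderiv ℝ scalingQuot x v = ((v.2.2.1 * x.1 - x.2.2.1 * v.1) / x.1 ^ 2, v.2.1, v.2.2.2) := by
  rw [← (differentiableAt_scalingQuot hx).lineDeriv_eq_fderiv,
    (hasLineDerivAt_scalingQuot hx v).lineDeriv]

theorem harmonic_oscillator_scaling_reduction_general (r θ r' θ' : ℝ)
    (hr : 0 < r) :
    fderiv ℝ scalingQuot (r, θ, r', θ') (hoVF (r, θ, r', θ'))
      = contactVF (scalingQuot (r, θ, r', θ')) := by
  rw [fderiv_scalingQuot_apply hr.ne']
  simp only [hoVF, contactVF, scalingQuot, Prod.mk.injEq, true_and]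
  constructor
  · field_simp
    ring
  · rw [div_div_eq_mul_div]
    ring

/-- The Hamiltonian vector field of the 2d harmonic oscillator
projects, under the scaling reduction `P(r, θ, r', θ') = (r'/r, θ, θ')`, to the contact
Hamiltonian vector field `X₁` of equation (p1) of the paper. -/
theorem harmonic_oscillator_scaling_reduction (r θ r' θ' : ℝ)
    (hr : 0 < r) (hr' : 0 < r') :
    fderiv ℝ scalingQuot (r, θ, r', θ') (hoVF (r, θ, r', θ'))
      = contactVF (scalingQuot (r, θ, r', θ')) :=
  harmonic_oscillator_scaling_reduction_general r θ r' θ' hr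
end
end

section
/- For all (r, θ, r', θ') ∈ ℝ⁴ with r > 0 and r' > 0, one has fderiv ℝ Q (r, θ, r', θ') (X (r, θ, r', θ')) = X₂ (Q (r, θ, r', θ')), where Q(r, θ, r', θ') = (r, r', θ − θ') is the quotient map of the standard S¹-symmetry and X₂(r, r', α) = (−r' * cos α, r * cos α, (r'/r − r/r') * sin α). That is, the Hamiltonian vector field of the 2d harmonic oscillator projects under the rotational reduction to the Poisson Hamiltonian vector field X_{H^{S¹}} of Example 4.4 of the paper. -/
open Real

noncomputable section

/-- The quotient map of the standard `S¹`-symmetry: `Q(r, θ, r', θ') = (r, r', θ − θ')`. -/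
def rotationQuot (x : ℝ × ℝ × ℝ × ℝ) : ℝ × ℝ × ℝ :=
  (x.1, x.2.2.1, x.2.1 - x.2.2.2)

/-- The reduced Poisson Hamiltonian vector field
`X₂(r, r', α) = (−r' cos α, r cos α, (r'/r − r/r') sin α)`. -/
def poissonVF (y : ℝ × ℝ × ℝ) : ℝ × ℝ × ℝ :=
  (-(y.2.1) * cos y.2.2, y.1 * cos y.2.2, (y.2.1 / y.1 - y.1 / y.2.1) * sin y.2.2)

/-!
The quotient map `Q` is linear, so its derivative at every point is `Q` itself, and the claim
becomes the pointwise identity `Q ∘ X = X₂ ∘ Q`, which only needs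
`(r'/r) sin α - (r/r') sin α = (r'/r - r/r') sin α`.
-/

def rotationQuotₗ : (ℝ × ℝ × ℝ × ℝ) →ₗ[ℝ] ℝ × ℝ × ℝ where
  toFun := rotationQuot
  map_add' x y := by
    simp only [rotationQuot, Prod.fst_add, Prod.snd_add, Prod.mk_add_mk, add_sub_add_comm]
  map_smul' c x := by
    simp only [rotationQuot, Prod.smul_fst, Prod.smul_snd, Prod.smul_mk, smul_sub,
      RingHom.id_apply]

theorem fderiv_rotationQuot_apply (x v : ℝ × ℝ × ℝ × ℝ) :
    fderiv ℝ rotationQuot x v = rotationQuot v := by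
  rw [show rotationQuot = rotationQuotₗ.toContinuousLinearMap from rfl,
    ContinuousLinearMap.fderiv]

theorem rotationQuot_hoVF (x : ℝ × ℝ × ℝ × ℝ) :
    rotationQuot (hoVF x) = poissonVF (rotationQuot x) := by
  simp only [rotationQuot, hoVF, poissonVF, sub_mul]

theorem harmonic_oscillator_rotational_reduction_general (r θ r' θ' : ℝ) :
    fderiv ℝ rotationQuot (r, θ, r', θ') (hoVF (r, θ, r', θ'))
      = poissonVF (rotationQuot (r, θ, r', θ')) := by
  rw [fderiv_rotationQuot_apply, rotationQuot_hoVF]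

/-- The Hamiltonian vector field of the 2d harmonic oscillator
projects, under the rotational reduction `Q(r, θ, r', θ') = (r, r', θ − θ')`, to the
Poisson Hamiltonian vector field `X_{H^{S¹}}` of Example 4.4 of the paper. -/
theorem harmonic_oscillator_rotational_reduction (r θ r' θ' : ℝ)
    (hr : 0 < r) (hr' : 0 < r') :
    fderiv ℝ rotationQuot (r, θ, r', θ') (hoVF (r, θ, r', θ'))
      = poissonVF (rotationQuot (r, θ, r', θ')) :=
  harmonic_oscillator_rotational_reduction_general r θ r' θ'
end
end

section
/- Define X₃(ρ', σ) = ((1 + ρ'²) * cos σ, ((ρ'² − 1)/ρ') * sin σ) on {ρ' > 0}. Then: (i) for the one-step-scaling-reduced field X₁(ρ', θ, θ') = ((1 + ρ'²) * cos(θ − θ'), ρ' * sin(θ − θ'), sin(θ − θ')/ρ') and the map A(ρ', θ, θ') = (ρ', θ − θ'), one has fderiv ℝ A x (X₁ x) = X₃ (A x) for all x with ρ' > 0; and (ii) for the one-step-rotation-reduced field X₂(r, r', α) = (−r' * cos α, r * cos α, (r'/r − r/r') * sin α) and the map B(r, r', α) = (r'/r, α), one has fderiv ℝ B y (X₂ y)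 = X₃ (B y) for all y with r > 0 and r' > 0. Hence the two reduction orders (first scaling then rotation, or first rotation then scaling) of the 2d harmonic oscillator produce the same reduced vector field X₃, an instance of the equivalence Theorem 6.1 of the paper. -/
open Real

noncomputable section

/-- The fully reduced field `X₃(ρ', σ) = ((1 + ρ'²) cos σ, ((ρ'² − 1)/ρ') sin σ)`. -/
def reducedVF (z : ℝ × ℝ) : ℝ × ℝ :=
  ((1 + z.1 ^ 2) * cos z.2, ((z.1 ^ 2 - 1) / z.1) * sin z.2)

/-- The second-step rotational quotient map `A(ρ', θ, θ') = (ρ', θ − θ')`. -/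
def quotA (y : ℝ × ℝ × ℝ) : ℝ × ℝ := (y.1, y.2.1 - y.2.2)

/-- The second-step scaling quotient map `B(r, r', α) = (r'/r, α)`. -/
def quotB (y : ℝ × ℝ × ℝ) : ℝ × ℝ := (y.2.1 / y.1, y.2.2)

/-! Each identity is a direct computation of the derivative of the quotient map: `A` is linear,
so its derivative is `A` itself, and `B` is a ratio of coordinates, differentiated by the
quotient rule; the two push-forwards then agree with `X₃` after clearing denominators. -/

theorem HasFDerivAt.div {𝕜 E : Type*} [NontriviallyNormedField 𝕜] [NormedAddCommGroup E]
    [NormedSpace 𝕜 E] {f g : E → 𝕜} {f' g' : E →L[𝕜] 𝕜} {x : E}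
    (hf : HasFDerivAt f f' x) (hg : HasFDerivAt g g' x) (hx : g x ≠ 0) :
    HasFDerivAt (f / g) ((g x ^ 2)⁻¹ • (g x • f' - f x • g')) x := by
  have hinv : HasFDerivAt g⁻¹ _ x := (hasFDerivAt_inv hx).comp x hg
  rw [div_eq_mul_inv]
  refine (hf.mul hinv).congr_fderiv ?_
  ext v
  simp only [Pi.inv_apply, add_apply, smul_apply, sub_apply, ContinuousLinearMap.comp_apply,
    ContinuousLinearMap.toSpanSingleton_apply, smul_eq_mul, mul_neg]
  field_simp
  ring

theorem fderiv_quotA_apply (x v : ℝ × ℝ × ℝ) : fderiv ℝ quotA x v = (v.1, v.2.1 - v.2.2) := by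
  have h : HasFDerivAt (𝕜 := ℝ) quotA _ x :=
    hasFDerivAt_fst.prodMk (hasFDerivAt_snd.fst.fun_sub hasFDerivAt_snd.snd)
  rw [h.fderiv]
  rfl

theorem fderiv_quotB_apply {y : ℝ × ℝ × ℝ} (hy : y.1 ≠ 0) (v : ℝ × ℝ × ℝ) :
    fderiv ℝ quotB y v = ((y.1 * v.2.1 - y.2.1 * v.1) / y.1 ^ 2, v.2.2) := by
  have h : HasFDerivAt quotB _ y :=
    (hasFDerivAt_snd.fst.div hasFDerivAt_fst hy).prodMk hasFDerivAt_snd.snd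
  rw [h.fderiv]
  simp only [ContinuousLinearMap.prod_apply, smul_apply, sub_apply, ContinuousLinearMap.comp_apply,
    ContinuousLinearMap.coe_snd', ContinuousLinearMap.coe_fst', smul_eq_mul, Prod.mk.injEq,
    and_true]
  field_simp

theorem fderiv_quotA_contactVF {x : ℝ × ℝ × ℝ} (hx : x.1 ≠ 0) :
    fderiv ℝ quotA x (contactVF x) = reducedVF (quotA x) := by
  rw [fderiv_quotA_apply]
  simp only [contactVF, reducedVF, quotA, Prod.mk.injEq, true_and]
  field_simp

theorem fderiv_quotB_poissonVF {y : ℝ × ℝ × ℝ} (hy : y.1 ≠ 0) (hy' : y.2.1 ≠ 0) :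
    fderiv ℝ quotB y (poissonVF y) = reducedVF (quotB y) := by
  rw [fderiv_quotB_apply hy]
  ext
  · simp only [poissonVF, reducedVF, quotB]
    field_simp
    ring
  · simp only [poissonVF, reducedVF, quotB]
    field_simp

/-- The two reduction orders of the 2d harmonic oscillator (first
scaling then rotation, or first rotation then scaling) both produce the reduced vector
field `X₃`: an instance of the equivalence Theorem 6.1 of the paper. -/
theorem harmonic_oscillator_reductions_commute :
    (∀ x : ℝ × ℝ × ℝ, 0 < x.1 →
      fderiv ℝ quotA x (contactVF x) = reducedVF (quotA x)) ∧
    (∀ y : ℝ × ℝ × ℝ, 0 < y.1 → 0 < y.2.1 →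
      fderiv ℝ quotB y (poissonVF y) = reducedVF (quotB y)) :=
  ⟨fun x hx => fderiv_quotA_contactVF hx.ne',
    fun y hy hy' => fderiv_quotB_poissonVF hy.ne' hy'.ne'⟩
end
end

section
/- Let θ, ρ', θ' : ℝ → ℝ be differentiable with ρ'(t) > 0 for all t, and suppose that for every t: HasDerivAt θ (ρ'(t) * sin(θ(t) − θ'(t))) t, HasDerivAt ρ' ((1 + ρ'(t)²) * cos(θ(t) − θ'(t))) t, and HasDerivAt θ' (sin(θ(t) − θ'(t)) / ρ'(t)) t (i.e. (θ, ρ', θ') is an integral curve of the scaling-reduced harmonic-oscillator field X₁). Let r₀ > 0 and define r(t) = r₀ * Real.sqrt ((1 + ρ'(0)²) / (1 + ρ'(t)²)) and r'(t) = r(t) * ρ'(t). Then for every t: HasDerivAt r (− r'(t) * cos(θ(t) − θ'(t))) t, HasDerivAt (fun t => r t * ρ' t) (r(t) * cos(θ(t) − θ'(t))) t, HasDerivAt θ ((r'(t)/r(t)) * sin(θ(t) − θ'(t))) t, and HasDerivAt θ' ((r(t)/r'(t)) * sin(θ(t) − θ'(t))) t; that is, Γ(t) = (r(t), θ(t), r'(t),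 θ'(t)) is an integral curve of the Hamiltonian vector field X(r, θ, r', θ') = (−r' cos(θ−θ'), (r'/r) sin(θ−θ'), r cos(θ−θ'), (r/r') sin(θ−θ')) of the 2d harmonic oscillator, with r(0) = r₀. This is the reconstruction, from the reduced contact dynamics, of the symplectic dynamics of the 2d harmonic oscillator via its scaling symmetry (Section 7 of the paper). -/
open Real

/-! The radius is chosen so that the energy `H = r² (1 + ρ'²) / 2` is conserved: along the
reduced flow `d/dt log (1 + ρ'²) = 2 ρ' cos (θ - θ')`, hence
`ṙ = -r ρ' cos (θ - θ') = -r' cos (θ - θ')`. The other components follow from the product rule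
and `r' / r = ρ'`. -/

theorem HasDerivAt.const_div_sqrt_one_add_sq {f : ℝ → ℝ} {f' t : ℝ} (c : ℝ)
    (hf : HasDerivAt f f' t) :
    HasDerivAt (fun s => c / √(1 + f s ^ 2))
      (-(c / √(1 + f t ^ 2)) * (f t * f' / (1 + f t ^ 2))) t := by
  have hpos : 0 < 1 + f t ^ 2 := by positivity
  have hsqrt := ((hf.fun_pow 2).const_add 1).sqrt hpos.ne'
  have h := (hsqrt.fun_inv (sqrt_pos.2 hpos).ne').const_mul c
  simp only [← div_eq_mul_inv] at h
  refine h.congr_deriv ?_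
  field_simp
  rw [sq_sqrt hpos.le]
  ring

theorem harmonic_oscillator_reconstruction_general
    (θ ρ' θ' : ℝ → ℝ)
    (hθ : ∀ t, HasDerivAt θ (ρ' t * sin (θ t - θ' t)) t)
    (hρ' : ∀ t, HasDerivAt ρ' ((1 + (ρ' t) ^ 2) * cos (θ t - θ' t)) t)
    (hθ' : ∀ t, HasDerivAt θ' (sin (θ t - θ' t) / ρ' t) t)
    (r₀ : ℝ) (hr₀ : 0 < r₀)
    (r r' : ℝ → ℝ)
    (hr : ∀ t, r t = r₀ * Real.sqrt ((1 + (ρ' 0) ^ 2) / (1 + (ρ' t) ^ 2)))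
    (hr' : ∀ t, r' t = r t * ρ' t) :
    r 0 = r₀ ∧
    ∀ t : ℝ,
      HasDerivAt r (- r' t * cos (θ t - θ' t)) t ∧
      HasDerivAt (fun s => r s * ρ' s) (r t * cos (θ t - θ' t)) t ∧
      HasDerivAt θ ((r' t / r t) * sin (θ t - θ' t)) t ∧
      HasDerivAt θ' ((r t / r' t) * sin (θ t - θ' t)) t := by
  have hr_div : r = fun t => r₀ * √(1 + ρ' 0 ^ 2) / √(1 + ρ' t ^ 2) := by
    funext t
    rw [hr, sqrt_div' _ (by positivity), mul_div_assoc]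
  have hr_ne : ∀ t, r t ≠ 0 := fun t => by
    rw [hr t]
    positivity
  have hr_deriv : ∀ t, HasDerivAt r (-r' t * cos (θ t - θ' t)) t := fun t => by
    rw [hr_div]
    refine ((hρ' t).const_div_sqrt_one_add_sq (r₀ * √(1 + ρ' 0 ^ 2))).congr_deriv ?_
    simp only [hr', hr_div]
    field_simp
  refine ⟨by rw [hr, div_self (by positivity), sqrt_one, mul_one], fun t => ⟨hr_deriv t, ?_, ?_, ?_⟩⟩
  · refine ((hr_deriv t).mul (hρ' t)).congr_deriv ?_
    rw [hr']
    ring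
  · refine (hθ t).congr_deriv ?_
    rw [hr', mul_div_cancel_left₀ _ (hr_ne t)]
  · refine (hθ' t).congr_deriv ?_
    rw [hr', div_mul_cancel_left₀ (hr_ne t)]
    ring

/-- Reconstruction of the symplectic dynamics of the 2d harmonic
oscillator from the reduced contact dynamics via its scaling symmetry (Section 7 of
the paper): if `(θ, ρ', θ')` is an integral curve of the scaling-reduced field `X₁`,
then `Γ(t) = (r(t), θ(t), r'(t), θ'(t))`, with
`r(t) = r₀ √((1 + ρ'(0)²)/(1 + ρ'(t)²))` and `r'(t) = r(t) ρ'(t)`, is an integral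
curve of the Hamiltonian vector field of the 2d harmonic oscillator with `r(0) = r₀`. -/
theorem harmonic_oscillator_reconstruction
    (θ ρ' θ' : ℝ → ℝ) (hρ'pos : ∀ t, 0 < ρ' t)
    (hθ : ∀ t, HasDerivAt θ (ρ' t * sin (θ t - θ' t)) t)
    (hρ' : ∀ t, HasDerivAt ρ' ((1 + (ρ' t) ^ 2) * cos (θ t - θ' t)) t)
    (hθ' : ∀ t, HasDerivAt θ' (sin (θ t - θ' t) / ρ' t) t)
    (r₀ : ℝ) (hr₀ : 0 < r₀)
    (r r' : ℝ → ℝ)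
    (hr : ∀ t, r t = r₀ * Real.sqrt ((1 + (ρ' 0) ^ 2) / (1 + (ρ' t) ^ 2)))
    (hr' : ∀ t, r' t = r t * ρ' t) :
    r 0 = r₀ ∧
    ∀ t : ℝ,
      HasDerivAt r (- r' t * cos (θ t - θ' t)) t ∧
      HasDerivAt (fun s => r s * ρ' s) (r t * cos (θ t - θ' t)) t ∧
      HasDerivAt θ ((r' t / r t) * sin (θ t - θ' t)) t ∧
      HasDerivAt θ' ((r t / r' t) * sin (θ t - θ' t)) t :=
  harmonic_oscillator_reconstruction_general θ ρ' θ' hθ hρ' hθ' r₀ hr₀ r r' hr hr'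
end
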